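/- Let (V,q) be a finite weighted graph satisfying CD(0,∞) with q(x,y) > 0 whenever x ∼ y, and let (u_t) solve ∂_t u_t = Δu_t + Γu_t with u_0 ≤ 0 and Γu_0 ≤ q_min/2. Then for all x, y ∈ V and t > 0: |√(−u_t(y)) − √(−u_t(x))| ≤ d(x,y)/√(2t·q_min). -/

import Mathlib

open Finset Real

/-- Graph Laplacian on a finite weighted graph. -/
noncomputable def glap {V : Type*} [Fintype V] (q : V → V → ℝ) (f : V → ℝ) (x : V) : ℝ :=
  ∑ y, q x y * (f y - f x)

/-- Carré du champ operator Γ(f,g). -/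
noncomputable def gGammaBil {V : Type*} [Fintype V] (q : V → V → ℝ) (f g : V → ℝ) (x : V) : ℝ :=
  (1 / 2) * ∑ y, q x y * (f y - f x) * (g y - g x)

/-- Carré du champ Γf = Γ(f,f). -/
noncomputable def gGamma {V : Type*} [Fintype V] (q : V → V → ℝ) (f : V → ℝ) (x : V) : ℝ :=
  gGammaBil q f f x

/-- Iterated carré du champ Γ₂f = (ΔΓf − 2Γ(f,Δf))/2. -/
noncomputable def gGammaTwo {V : Type*} [Fintype V] (q : V → V → ℝ) (f : V → ℝ) (x : V) : ℝ :=
  (glap q (gGamma q f) x - 2 * gGammaBil q f (glap q f) x) / 2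

/-- The underlying simple graph of a weighted graph: x ∼ y iff q(x,y) > 0 or q(y,x) > 0. -/
def graphOf {V : Type*} [Fintype V] (q : V → V → ℝ) : SimpleGraph V where
  Adj x y := x ≠ y ∧ (0 < q x y ∨ 0 < q y x)
  symm := ⟨fun x y h => ⟨h.1.symm, h.2.symm⟩⟩
  loopless := ⟨fun x h => h.1 rfl⟩


/-!
Under CD(0,∞) the time derivative `2Γ(u, Δu + Γu)` of `Γu` along `∂ₜu = Δu + Γu` is at most
`∑ᵧ q(x,y) (1 + u(y) - u(x)) (Γu(y) - Γu(x))`. A maximum principle for the running maximum over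
the finite vertex set (via Grönwall) first keeps `Γu ≤ q_min/2`, which forces `|u(y) - u(x)| ≤ 1`
on edges and so makes the weights `1 + u(y) - u(x)` nonnegative; the same principle then gives
Hamilton's estimate `tΓu_t + u_t ≤ 0`. On an edge `q_min (u(y) - u(x))² ≤ 2Γu(x) ≤ -2u(x)/t`,
so `√(-u_t)` changes by at most `1/√(2t q_min)`, and summing along a geodesic gives the bound.
-/

open Set Filter Topology

section MaximumPrinciple

variable {V : Type*} [Fintype V]

lemma eventually_sup'_lt_of_hasDerivWithinAt [Nonempty V] {f : ℝ → V → ℝ} {f' : V → ℝ}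
    {t r : ℝ} (hr : 0 < r) (hf : ∀ x, HasDerivWithinAt (f · x) (f' x) (Ioi t) t)
    (hmax : ∀ x, (∀ y, f t y ≤ f t x) → f' x < r) :
    ∀ᶠ z in 𝓝[>] t,
      univ.sup' univ_nonempty (f z) < univ.sup' univ_nonempty (f t) + r * (z - t) := by
  set M := univ.sup' univ_nonempty (f t)
  suffices h : ∀ x, ∀ᶠ z in 𝓝[>] t, f z x < M + r * (z - t) by
    filter_upwards [eventually_all.2 h] with z hz using (sup'_lt_iff _).2 fun x _ => hz x
  intro x
  by_cases hx : ∀ y, f t y ≤ f t x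
  · filter_upwards [(hf x).limsup_slope_le' (lt_irrefl t) (hmax x hx), self_mem_nhdsWithin]
      with z hslope (hz : t < z)
    rw [slope_def_field, div_lt_iff₀ (sub_pos.2 hz)] at hslope
    linarith [le_sup' (f t) (mem_univ x)]
  · obtain ⟨y, hy⟩ := not_forall.1 hx
    have hlt : f t x < M := (not_le.1 hy).trans_le (le_sup' (f t) (mem_univ y))
    filter_upwards [(hf x).continuousWithinAt.eventually_lt_const hlt, self_mem_nhdsWithin]
      with z hfz (hz : t < z)
    nlinarith

theorem le_of_hasDerivWithinAt_le_mul_max {f f' : ℝ → V → ℝ} {a b c L : ℝ} (hL : 0 ≤ L)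
    (hf : ∀ t ∈ Icc a b, ∀ x, HasDerivWithinAt (f · x) (f' t x) (Icc a b) t)
    (hder : ∀ t ∈ Ico a b, ∀ x, (∀ y, f t y ≤ f t x) → f' t x ≤ L * max (f t x - c) 0)
    (ha : ∀ x, f a x ≤ c) : ∀ t ∈ Icc a b, ∀ x, f t x ≤ c := by
  rcases isEmpty_or_nonempty V with _ | _
  · exact fun _ _ x => isEmptyElim x
  set M : ℝ → ℝ := fun t => univ.sup' univ_nonempty (f t)
  set g : ℝ → ℝ := fun t => max (M t - c) 0
  have hM_cont : ContinuousOn M (Icc a b) :=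
    ContinuousOn.finset_sup'_apply univ_nonempty fun x _ t ht => (hf t ht x).continuousWithinAt
  have hg_cont : ContinuousOn g (Icc a b) :=
    (hM_cont.sub continuousOn_const).sup continuousOn_const
  have hg_slope : ∀ t ∈ Ico a b, ∀ r, L * g t < r →
      ∃ᶠ z in 𝓝[>] t, (z - t)⁻¹ * (g z - g t) < r := by
    intro t ht r hr
    have hr0 : 0 < r := (mul_nonneg hL (le_max_right _ _)).trans_lt hr
    have hM := eventually_sup'_lt_of_hasDerivWithinAt hr0
      (fun x => (hf t (Ico_subset_Icc_self ht) x).mono_of_mem_nhdsWithin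
        (Icc_mem_nhdsGT_of_mem ht))
      (fun x hx => (hder t ht x hx).trans_lt <| lt_of_le_of_lt
        (mul_le_mul_of_nonneg_left (max_le_max_right 0
          (sub_le_sub_right (le_sup' (f t) (mem_univ x)) c)) hL) hr)
    refine Eventually.frequently ?_
    filter_upwards [hM, self_mem_nhdsWithin] with z hz (hzt : t < z)
    rw [inv_mul_lt_iff₀ (sub_pos.2 hzt)]
    calc g z - g t ≤ max (M z - M t) 0 := by
          simpa only [sub_sub_sub_cancel_right, sub_self] using
            max_sub_max_le_max (M z - c) 0 (M t - c) 0
      _ < (z - t) * r := max_lt (by linarith) (mul_pos (sub_pos.2 hzt) hr0)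
  have hga : g a ≤ 0 := max_le (sub_nonpos.2 (sup'_le _ _ fun x _ => ha x)) le_rfl
  intro t ht x
  have hgt := le_gronwallBound_of_liminf_deriv_right_le hg_cont hg_slope hga
    (fun t _ => (add_zero (L * g t)).ge) t ht
  rw [gronwallBound_ε0, zero_mul] at hgt
  have hfM : f t x ≤ M t := le_sup' (f t) (mem_univ x)
  have hMg : M t - c ≤ g t := le_max_left _ _
  linarith

end MaximumPrinciple

section CarreDuChamp

variable {V : Type*} [Fintype V] {q : V → V → ℝ}

lemma gGamma_nonneg (hq : ∀ x y, 0 ≤ q x y) (w : V → ℝ) (x : V) : 0 ≤ gGamma q w x :=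
  mul_nonneg one_half_pos.le <| sum_nonneg fun y _ => by
    rw [mul_assoc]; exact mul_nonneg (hq x y) (mul_self_nonneg _)

lemma two_gGamma_eq_sum (w : V → ℝ) (x : V) :
    2 * gGamma q w x = ∑ y, q x y * (w y - w x) ^ 2 := by
  simp only [gGamma, gGammaBil, ← mul_assoc, sq]
  ring

lemma mul_sq_sub_le_two_gGamma (hq : ∀ x y, 0 ≤ q x y) {m : ℝ} {x y : V} (hm : m ≤ q x y)
    (w : V → ℝ) : m * (w y - w x) ^ 2 ≤ 2 * gGamma q w x := by
  rw [two_gGamma_eq_sum]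
  exact (mul_le_mul_of_nonneg_right hm (sq_nonneg _)).trans <|
    single_le_sum (f := fun z => q x z * (w z - w x) ^ 2)
      (fun z _ => mul_nonneg (hq x z) (sq_nonneg _)) (mem_univ y)

lemma sum_mul_le_sum_mul_of_pos {ι : Type*} [Fintype ι] {p g : ι → ℝ} {c : ℝ}
    (hp : ∀ i, 0 ≤ p i) (hg : ∀ i, 0 < p i → g i ≤ c) :
    ∑ i, p i * g i ≤ (∑ i, p i) * c := by
  rw [sum_mul]
  refine sum_le_sum fun i _ => ?_
  rcases (hp i).eq_or_lt with hi | hi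
  · simp [← hi]
  · exact mul_le_mul_of_nonneg_left (hg i hi) hi.le

lemma hasDerivWithinAt_gGamma {u : ℝ → V → ℝ} {D : V → ℝ} {s : Set ℝ} {t : ℝ}
    (hD : ∀ y, HasDerivWithinAt (u · y) (D y) s t) (x : V) :
    HasDerivWithinAt (fun r => gGamma q (u r) x) (2 * gGammaBil q (u t) D x) s t := by
  have hdiff y : HasDerivWithinAt (fun r => u r y - u r x) (D y - D x) s t := (hD y).sub (hD x)
  refine ((HasDerivWithinAt.fun_sum (u := univ) fun y _ =>
    ((hdiff y).const_mul (q x y)).fun_mul (hdiff y)).const_mul (1 / 2 : ℝ)).congr_deriv ?_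
  simp only [gGammaBil, mul_sum]
  exact sum_congr rfl fun y _ => by ring

lemma two_gGammaBil_glap_add_gGamma_le {w : V → ℝ} {x : V} (hCD : 0 ≤ gGammaTwo q w x) :
    2 * gGammaBil q w (fun z => glap q w z + gGamma q w z) x ≤
      ∑ y, q x y * ((1 + (w y - w x)) * (gGamma q w y - gGamma q w x)) := by
  have hsplit : 2 * gGammaBil q w (fun z => glap q w z + gGamma q w z) x
      = 2 * gGammaBil q w (glap q w) x + 2 * gGammaBil q w (gGamma q w) x := by
    simp only [gGammaBil, ← mul_add, ← sum_add_distrib]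
    congr 2
    exact sum_congr rfl fun y _ => by ring
  have hsum : glap q (gGamma q w) x + 2 * gGammaBil q w (gGamma q w) x
      = ∑ y, q x y * ((1 + (w y - w x)) * (gGamma q w y - gGamma q w x)) := by
    simp only [glap, gGammaBil, ← mul_assoc, mul_sum, ← sum_add_distrib]
    exact sum_congr rfl fun y _ => by ring
  rw [gGammaTwo] at hCD
  linarith

lemma one_add_mul_sub_le {m a b δ : ℝ} (hm : 0 < m) (hb : 0 ≤ b) (hba : b ≤ a)
    (hδ : m * δ ^ 2 ≤ 2 * a) : (1 + δ) * (b - a) ≤ 2 / m * a * max (a - m / 2) 0 := by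
  rcases le_or_gt 0 (1 + δ) with hδ1 | hδ1
  · exact (mul_nonpos_of_nonneg_of_nonpos hδ1 (sub_nonpos.2 hba)).trans
      (mul_nonneg (mul_nonneg (by positivity) (hb.trans hba)) (le_max_right _ _))
  · have hδa : -δ ≤ 2 * a / m := by
      rw [le_div_iff₀ hm]
      nlinarith
    have hδ2 : m < m * δ ^ 2 := lt_mul_right hm (by nlinarith)
    rw [max_eq_left (by linarith), show 2 / m * a * (a - m / 2) = a * (2 * a / m - 1) by
      field_simp]
    nlinarith

lemma gGamma_evolution_le_of_max {m : ℝ} {w : V → ℝ} {x : V} (hq : ∀ x y, 0 ≤ q x y)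
    (hm : 0 < m) (hqmin : ∀ y, 0 < q x y → m ≤ q x y) (hCD : 0 ≤ gGammaTwo q w x)
    (hmax : ∀ y, gGamma q w y ≤ gGamma q w x) :
    2 * gGammaBil q w (fun z => glap q w z + gGamma q w z) x ≤
      (∑ y, q x y) * (2 / m * gGamma q w x) * max (gGamma q w x - m / 2) 0 := by
  rw [mul_assoc]
  exact (two_gGammaBil_glap_add_gGamma_le hCD).trans <| sum_mul_le_sum_mul_of_pos (hq x)
    fun y hy => one_add_mul_sub_le hm (gGamma_nonneg hq w y) (hmax y)
      (mul_sq_sub_le_two_gGamma hq (hqmin y hy) w)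

lemma hamilton_evolution_nonpos_of_max {m t : ℝ} {w : V → ℝ} {x : V} (hq : ∀ x y, 0 ≤ q x y)
    (hm : 0 < m) (hqmin : ∀ y, 0 < q x y → m ≤ q x y) (hCD : 0 ≤ gGammaTwo q w x) (ht : 0 ≤ t)
    (hΓ : gGamma q w x ≤ m / 2)
    (hmax : ∀ y, t * gGamma q w y + w y ≤ t * gGamma q w x + w x) :
    gGamma q w x + t * (2 * gGammaBil q w (fun z => glap q w z + gGamma q w z) x) +
      (glap q w x + gGamma q w x) ≤ 0 := by
  have hsum : 2 * gGamma q w x + glap q w x +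
      t * ∑ y, q x y * ((1 + (w y - w x)) * (gGamma q w y - gGamma q w x)) =
      ∑ y, q x y * ((w y - w x) ^ 2 + (w y - w x) +
        (1 + (w y - w x)) * (t * (gGamma q w y - gGamma q w x))) := by
    rw [two_gGamma_eq_sum]
    simp only [glap, mul_sum, ← sum_add_distrib]
    exact sum_congr rfl fun y _ => by ring
  have hterm : ∀ y, 0 < q x y → (w y - w x) ^ 2 + (w y - w x) +
      (1 + (w y - w x)) * (t * (gGamma q w y - gGamma q w x)) ≤ 0 := by
    intro y hy
    have hδ : (w y - w x) ^ 2 ≤ 1 := le_of_mul_le_mul_left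
      (by linarith [mul_sq_sub_le_two_gGamma hq (hqmin y hy) w]) hm
    have hδ1 : 0 ≤ 1 + (w y - w x) := by nlinarith
    have hT : t * (gGamma q w y - gGamma q w x) ≤ -(w y - w x) := by linarith [hmax y]
    nlinarith [mul_le_mul_of_nonneg_left hT hδ1]
  have hterms := sum_mul_le_sum_mul_of_pos (hq x) hterm
  have hCD' := mul_le_mul_of_nonneg_left (two_gGammaBil_glap_add_gGamma_le hCD) ht
  rw [mul_zero] at hterms
  linarith

lemma sqrt_sub_sqrt_le_inv_sqrt {a b s : ℝ} (ha : 0 ≤ a) (hs : 0 < s)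
    (h : s * (b - a) ^ 2 ≤ 2 * a) : √b - √a ≤ (√(2 * s))⁻¹ := by
  set k := (√(2 * s))⁻¹
  have hk2 : k ^ 2 = (2 * s)⁻¹ := by rw [inv_pow, Real.sq_sqrt (by positivity)]
  have hba : b - a ≤ 2 * k * √a := by
    refine (abs_le_of_sq_le_sq ?_ (by positivity)).trans' (le_abs_self _)
    rw [mul_pow, mul_pow, hk2, Real.sq_sqrt ha,
      show (2 : ℝ) ^ 2 * (2 * s)⁻¹ * a = 2 * a / s by field_simp, le_div_iff₀' hs]
    exact h
  rw [sub_le_iff_le_add, Real.sqrt_le_left (by positivity)]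
  nlinarith [Real.sq_sqrt ha]

lemma sqrt_neg_sub_sqrt_neg_le {m t : ℝ} {w : V → ℝ} {x y : V} (hq : ∀ x y, 0 ≤ q x y)
    (hm : 0 < m) (hxy : m ≤ q x y) (ht : 0 < t) (hHam : t * gGamma q w x + w x ≤ 0) :
    √(-w y) - √(-w x) ≤ (√(2 * t * m))⁻¹ := by
  have hΓ := gGamma_nonneg hq w x
  have hδ := mul_le_mul_of_nonneg_left (mul_sq_sub_le_two_gGamma hq hxy w) ht.le
  rw [mul_assoc]
  exact sqrt_sub_sqrt_le_inv_sqrt (by nlinarith) (mul_pos ht hm) (by nlinarith)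

end CarreDuChamp

section HeatFlow

variable {V : Type*} [Fintype V] {q : V → V → ℝ} {m : ℝ} {u : ℝ → V → ℝ}

theorem gGamma_le_of_heatFlow (hq : ∀ x y, 0 ≤ q x y) (hm : 0 < m)
    (hqmin : ∀ x y, 0 < q x y → m ≤ q x y) (hCD : ∀ f : V → ℝ, ∀ x, 0 ≤ gGammaTwo q f x)
    (hu : ∀ t ∈ Ici (0 : ℝ), ∀ x, HasDerivWithinAt (fun s => u s x)
      (glap q (u t) x + gGamma q (u t) x) (Ici 0) t)
    (h0 : ∀ x, gGamma q (u 0) x ≤ m / 2) {t : ℝ} (ht : 0 ≤ t) (x : V) :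
    gGamma q (u t) x ≤ m / 2 := by
  have hΓ' : ∀ s ∈ Icc 0 t, ∀ x, HasDerivWithinAt (fun r => gGamma q (u r) x)
      (2 * gGammaBil q (u s) (fun z => glap q (u s) z + gGamma q (u s) z) x) (Icc 0 t) s :=
    fun s hs => hasDerivWithinAt_gGamma fun y => (hu s hs.1 y).mono Icc_subset_Ici_self
  -- the rate `L` in the maximum principle comes from a bound on `Γu` over the compact `[0, t]`
  set coef : ℝ → V → ℝ := fun s x => (∑ y, q x y) * (2 / m * gGamma q (u s) x)
  obtain ⟨L, hL⟩ := isCompact_Icc.exists_bound_of_continuousOn (f := coef) <|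
    continuousOn_pi.2 fun x => continuousOn_const.mul <| continuousOn_const.mul
      fun s hs => (hΓ' s hs x).continuousWithinAt
  refine le_of_hasDerivWithinAt_le_mul_max ((norm_nonneg _).trans (hL 0 ⟨le_rfl, ht⟩)) hΓ'
    (fun s hs x hmax => ?_) h0 t ⟨ht, le_rfl⟩ x
  refine (gGamma_evolution_le_of_max hq hm (hqmin x) (hCD _ x) hmax).trans <|
    mul_le_mul_of_nonneg_right ?_ (le_max_right _ _)
  exact (Real.le_norm_self _).trans <| (norm_le_pi_norm (coef s) x).trans <|
    hL s (Ico_subset_Icc_self hs)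

theorem hamilton_gradient_estimate_of_heatFlow (hq : ∀ x y, 0 ≤ q x y) (hm : 0 < m)
    (hqmin : ∀ x y, 0 < q x y → m ≤ q x y) (hCD : ∀ f : V → ℝ, ∀ x, 0 ≤ gGammaTwo q f x)
    (hu : ∀ t ∈ Ici (0 : ℝ), ∀ x, HasDerivWithinAt (fun s => u s x)
      (glap q (u t) x + gGamma q (u t) x) (Ici 0) t)
    (hneg : ∀ x, u 0 x ≤ 0) (h0 : ∀ x, gGamma q (u 0) x ≤ m / 2) {t : ℝ} (ht : 0 ≤ t)
    (x : V) : t * gGamma q (u t) x + u t x ≤ 0 := by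
  refine le_of_hasDerivWithinAt_le_mul_max le_rfl (f := fun s x => s * gGamma q (u s) x + u s x)
    (f' := fun s x => 1 * gGamma q (u s) x +
      s * (2 * gGammaBil q (u s) (fun z => glap q (u s) z + gGamma q (u s) z) x) +
      (glap q (u s) x + gGamma q (u s) x))
    (fun s hs x => ?_) (fun s hs x hmax => ?_) (fun x => by simpa using hneg x) t ⟨ht, le_rfl⟩ x
  · have hu' y := (hu s hs.1 y).mono (Icc_subset_Ici_self : Icc 0 t ⊆ Ici 0)
    exact ((hasDerivWithinAt_id s _).fun_mul (hasDerivWithinAt_gGamma hu' x)).fun_add (hu' x)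
  · rw [zero_mul, one_mul]
    exact hamilton_evolution_nonpos_of_max hq hm (hqmin x) (hCD _ x) hs.1
      (gGamma_le_of_heatFlow hq hm hqmin hCD hu h0 hs.1 x) hmax

end HeatFlow

lemma pos_of_graphOf_adj {V : Type*} [Fintype V] {q : V → V → ℝ}
    (hsymm : ∀ x y, 0 < q x y → 0 < q y x) {x y : V} (h : (graphOf q).Adj x y) : 0 < q x y :=
  h.2.elim id (hsymm y x)

namespace SimpleGraph

variable {V : Type*} {G : SimpleGraph V} {f : V → ℝ} {K : ℝ}

lemma Walk.abs_sub_le_length_mul (hf : ∀ x y, G.Adj x y → |f y - f x| ≤ K) {x y : V}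
    (p : G.Walk x y) : |f y - f x| ≤ p.length * K := by
  induction p with
  | nil => simp
  | cons hadj p ih =>
    rw [length_cons, Nat.cast_succ, add_one_mul]
    exact (abs_sub_le _ _ _).trans (add_le_add ih (hf _ _ hadj))

lemma Connected.abs_sub_le_dist_mul (hG : G.Connected) (hf : ∀ x y, G.Adj x y → |f y - f x| ≤ K)
    (x y : V) : |f y - f x| ≤ G.dist x y * K := by
  obtain ⟨p, hp⟩ := hG.exists_walk_length_eq_dist x y
  exact hp ▸ p.abs_sub_le_length_mul hf

end SimpleGraph

theorem hamilton_harnack_CD_zero_infty_general {V : Type*} [Fintype V] (q : V → V → ℝ)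
    (hq : ∀ x y, 0 ≤ q x y) (qmin : ℝ)
    (hqmin_pos : 0 < qmin) (hqmin : ∀ x y, 0 < q x y → qmin ≤ q x y)
    (hsymm : ∀ x y, 0 < q x y → 0 < q y x)
    (hconn : (graphOf q).Connected)
    (hCD : ∀ f : V → ℝ, ∀ x, 0 ≤ gGammaTwo q f x)
    (u : ℝ → V → ℝ)
    (hu : ∀ t ∈ Set.Ici (0 : ℝ), ∀ x, HasDerivWithinAt (fun s => u s x)
      (glap q (u t) x + gGamma q (u t) x) (Set.Ici 0) t)
    (hneg : ∀ x, u 0 x ≤ 0)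
    (h0 : ∀ x, gGamma q (u 0) x ≤ qmin / 2) :
    ∀ x y : V, ∀ t : ℝ, 0 < t →
      |Real.sqrt (-(u t y)) - Real.sqrt (-(u t x))|
        ≤ ((graphOf q).dist x y : ℝ) / Real.sqrt (2 * t * qmin) := by
  intro x y t ht
  have hHam z := hamilton_gradient_estimate_of_heatFlow hq hqmin_pos hqmin hCD hu hneg h0 ht.le z
  have hedge x y (hxy : (graphOf q).Adj x y) :
      |√(-u t y) - √(-u t x)| ≤ (√(2 * t * qmin))⁻¹ :=
    abs_sub_le_iff.2
      ⟨sqrt_neg_sub_sqrt_neg_le hq hqmin_pos (hqmin _ _ (pos_of_graphOf_adj hsymm hxy)) ht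
        (hHam x),
      sqrt_neg_sub_sqrt_neg_le hq hqmin_pos (hqmin _ _ (pos_of_graphOf_adj hsymm hxy.symm)) ht
        (hHam y)⟩
  rw [div_eq_mul_inv]
  exact hconn.abs_sub_le_dist_mul hedge x y

/-- Hamilton-Harnack inequality under CD(0,∞):
|√(−u_t(y)) − √(−u_t(x))| ≤ d(x,y)/√(2t·q_min). -/
theorem hamilton_harnack_CD_zero_infty {V : Type*} [Fintype V] (q : V → V → ℝ)
    (hq : ∀ x y, 0 ≤ q x y) (hdiag : ∀ x, q x x = 0) (qmin : ℝ)
    (hqmin_pos : 0 < qmin) (hqmin : ∀ x y, 0 < q x y → qmin ≤ q x y)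
    (hsymm : ∀ x y, 0 < q x y → 0 < q y x)
    (hconn : (graphOf q).Connected)
    (hCD : ∀ f : V → ℝ, ∀ x, 0 ≤ gGammaTwo q f x)
    (u : ℝ → V → ℝ)
    (hu : ∀ t ∈ Set.Ici (0 : ℝ), ∀ x, HasDerivWithinAt (fun s => u s x)
      (glap q (u t) x + gGamma q (u t) x) (Set.Ici 0) t)
    (hneg : ∀ x, u 0 x ≤ 0)
    (h0 : ∀ x, gGamma q (u 0) x ≤ qmin / 2) :
    ∀ x y : V, ∀ t : ℝ, 0 < t →
      |Real.sqrt (-(u t y)) - Real.sqrt (-(u t x))|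
        ≤ ((graphOf q).dist x y : ℝ) / Real.sqrt (2 * t * qmin) :=
  hamilton_harnack_CD_zero_infty_general q hq qmin hqmin_pos hqmin hsymm hconn hCD u hu hneg h0
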